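/- Let X be a finite set with weight m, H selfadjoint on ℓ²(X,m), ω : X → (0,∞), and R ∈ ℝ. Then F_ω(x) := H x(x) − Σ_{y≠x}(ω(y)/ω(x))|H y(x)| ≥ R for all x ∈ X if and only if ‖e^{-tH} f‖_{ω,∞} ≤ e^{-Rt} ‖f‖_{ω,∞} for all t ≥ 0 and f : X → ℝ, where ‖f‖_{ω,∞} := max_x |f(x)|/ω(x). -/

import Mathlib

/-!
Conjugating by `D = diagonal ω` turns `‖·‖_{ω,∞}` into the sup norm and `H` into
`K = D⁻¹ H D`, whose unweighted Forman curvature `K x x - ∑_{y ≠ x} |K x y|` is `F_ω(x)`.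
If it is at least `R`, then for `c ≥ t K x x` the matrix `B = c - tK` has nonnegative diagonal,
so its row sums of absolute values, i.e. its ℓ^∞ operator norm, are at most `c - tR`; hence
`‖e^{-tK}‖ = e^{-c} ‖e^B‖ ≤ e^{-c} e^{‖B‖} ≤ e^{-Rt}`. Conversely, let `g` be `1` at `x` and
`-sign (K x y)` at `y ≠ x`; the `x`-coordinate `φ(t)` of `e^{-tK} g` satisfies `φ(t) ≤ e^{-Rt}`
with equality at `t = 0`, so `-F(x) = φ'(0) ≤ -R`.
-/

open NormedSpace Matrix Finset

theorem NormedSpace.norm_exp_le_exp_norm {𝔸 : Type*} [NormedRing 𝔸] [NormedAlgebra ℝ 𝔸]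
    [NormOneClass 𝔸] (a : 𝔸) : ‖exp a‖ ≤ Real.exp ‖a‖ := by
  rw [exp_eq_tsum ℝ, Real.exp_eq_exp_ℝ, exp_eq_tsum ℝ]
  refine (norm_tsum_le_tsum_norm (norm_expSeries_summable' a)).trans <|
    Summable.tsum_le_tsum (fun n => ?_) (norm_expSeries_summable' a) (expSeries_summable' ‖a‖)
  rw [norm_smul, smul_eq_mul, norm_inv, RCLike.norm_natCast]
  gcongr
  exact norm_pow_le a n

theorem HasDerivAt.nonpos_of_le_right {ψ : ℝ → ℝ} {ψ' a : ℝ} (hψ : HasDerivAt ψ ψ' a)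
    (hle : ∀ u, a < u → ψ u ≤ ψ a) : ψ' ≤ 0 := by
  refine le_of_tendsto hψ.tendsto_slope_zero_right ?_
  filter_upwards [self_mem_nhdsWithin] with u (hu : 0 < u)
  exact smul_nonpos_of_nonneg_of_nonpos (inv_nonneg.2 hu.le)
    (sub_nonpos.2 (hle _ (lt_add_of_pos_right a hu)))

theorem Pi.norm_eq_iSup {ι : Type*} [Fintype ι] {G : ι → Type*} [∀ i, SeminormedAddGroup (G i)]
    (f : ∀ i, G i) : ‖f‖ = ⨆ i, ‖f i‖ :=
  le_antisymm
    ((pi_norm_le_iff_of_nonneg (Real.iSup_nonneg fun _ => norm_nonneg _)).2 fun i =>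
      le_ciSup (Finite.bddAbove_range fun i => ‖f i‖) i)
    (Real.iSup_le (norm_le_pi_norm f) (norm_nonneg f))

theorem iSup_abs_div_eq_norm {X : Type*} [Fintype X] {ω : X → ℝ} (hω : ∀ x, 0 < ω x) (f : X → ℝ) :
    (⨆ x, |f x| / ω x) = ‖f / ω‖ := by
  simp only [Pi.norm_eq_iSup, Pi.div_apply, Real.norm_eq_abs, abs_div, abs_of_pos (hω _)]

namespace Matrix

section LinftyOpNorm

attribute [local instance] Matrix.linftyOpSeminormedAddCommGroup

theorem linfty_opNorm_le_of_forall_sum_le {m n α : Type*} [Fintype m] [Fintype n]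
    [SeminormedAddCommGroup α] {A : Matrix m n α} {r : ℝ} (hr : 0 ≤ r)
    (h : ∀ i, ∑ j, ‖A i j‖ ≤ r) : ‖A‖ ≤ r := by
  lift r to NNReal using hr
  rw [linfty_opNorm_def, NNReal.coe_le_coe]
  exact Finset.sup_le fun i _ => by rw [← NNReal.coe_le_coe, NNReal.coe_sum]; exact h i

end LinftyOpNorm

variable {X : Type*} [Fintype X] [DecidableEq X]

def formanCurvature (K : Matrix X X ℝ) (x : X) : ℝ := K x x - ∑ y ∈ univ.erase x, |K x y|

theorem sum_abs_smul_one_sub_smul_le {K : Matrix X X ℝ} {R t c : ℝ} (ht : 0 ≤ t)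
    (hK : ∀ x, R ≤ K.formanCurvature x) (hc : ∀ x, t * K x x ≤ c) (x : X) :
    ∑ y, |(c • (1 : Matrix X X ℝ) - t • K) x y| ≤ c - t * R := by
  have hoff : ∀ y ∈ univ.erase x, |(c • (1 : Matrix X X ℝ) - t • K) x y| = t * |K x y| := by
    intro y hy
    rw [sub_apply, smul_apply, one_apply_ne (ne_of_mem_erase hy).symm, smul_apply, smul_eq_mul,
      smul_eq_mul, mul_zero, zero_sub, abs_neg, abs_mul, abs_of_nonneg ht]
  rw [← add_sum_erase _ _ (mem_univ x), sum_congr rfl hoff, ← mul_sum, sub_apply, smul_apply,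
    one_apply_eq, smul_apply, smul_eq_mul, smul_eq_mul, mul_one,
    abs_of_nonneg (sub_nonneg.2 (hc x))]
  have hKx := mul_le_mul_of_nonneg_left (hK x) ht
  rw [formanCurvature] at hKx
  linarith

theorem exists_norm_le_one_mulVec_eq_formanCurvature (K : Matrix X X ℝ) (x : X) :
    ∃ g : X → ℝ, ‖g‖ ≤ 1 ∧ g x = 1 ∧ (K *ᵥ g) x = K.formanCurvature x := by
  let g : X → ℝ := fun y => if y = x then 1 else if 0 ≤ K x y then -1 else 1
  have hgx : g x = 1 := if_pos rfl
  have hoff : ∀ y ∈ univ.erase x, K x y * g y = -|K x y| := by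
    intro y hy
    by_cases hK : 0 ≤ K x y
    · simp [g, ne_of_mem_erase hy, hK, abs_of_nonneg hK]
    · simp [g, ne_of_mem_erase hy, hK, abs_of_neg (not_le.1 hK)]
  refine ⟨g, (pi_norm_le_iff_of_nonneg zero_le_one).2 fun y => ?_, hgx, ?_⟩
  · unfold g; split_ifs <;> simp
  · rw [mulVec, dotProduct, ← add_sum_erase _ _ (mem_univ x), sum_congr rfl hoff, sum_neg_distrib,
      formanCurvature, hgx, mul_one, sub_eq_add_neg]

section LinftyOpNormedRing

attribute [local instance] Matrix.linftyOpNormedRing Matrix.linftyOpNormedAlgebra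

theorem norm_exp_neg_smul_mulVec_le [Nonempty X] {K : Matrix X X ℝ} {R : ℝ}
    (hK : ∀ x, R ≤ K.formanCurvature x) {t : ℝ} (ht : 0 ≤ t) (g : X → ℝ) :
    ‖exp (-(t • K)) *ᵥ g‖ ≤ Real.exp (-R * t) * ‖g‖ := by
  obtain ⟨c, hc⟩ := Finite.exists_le fun x => t * K x x
  set B := c • (1 : Matrix X X ℝ) - t • K
  have hrow := sum_abs_smul_one_sub_smul_le ht hK hc
  have hB : ‖B‖ ≤ c - t * R := by
    have hcR : 0 ≤ c - t * R :=
      (sum_nonneg fun y _ => abs_nonneg _).trans (hrow (Classical.arbitrary X))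
    exact linfty_opNorm_le_of_forall_sum_le hcR hrow
  have hsplit : exp (-(t • K)) = Real.exp (-c) • exp B := by
    rw [show -(t • K) = algebraMap ℝ _ (-c) + B by
          simp [B, Algebra.algebraMap_eq_smul_one]; abel,
      Matrix.exp_add_of_commute _ _ (Algebra.commute_algebraMap_left _ _)]
    have hscalar : algebraMap ℝ (Matrix X X ℝ) (Real.exp (-c)) = exp (algebraMap ℝ _ (-c)) := by
      rw [Real.exp_eq_exp_ℝ]; exact algebraMap_exp_comm (-c)
    rw [← hscalar, Algebra.smul_def]
  calc ‖exp (-(t • K)) *ᵥ g‖ = Real.exp (-c) * ‖exp B *ᵥ g‖ := by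
        rw [hsplit, smul_mulVec, norm_smul, Real.norm_of_nonneg (Real.exp_pos _).le]
    _ ≤ Real.exp (-c) * (Real.exp (c - t * R) * ‖g‖) := by
        gcongr
        refine (linfty_opNorm_mulVec _ _).trans ?_
        gcongr
        exact (norm_exp_le_exp_norm B).trans (Real.exp_le_exp.2 hB)
    _ = Real.exp (-R * t) * ‖g‖ := by
        rw [← mul_assoc, ← Real.exp_add]; ring_nf

theorem hasDerivAt_exp_neg_smul_mulVec_apply (K : Matrix X X ℝ) (g : X → ℝ) (x : X) :
    HasDerivAt (fun u : ℝ => (exp (-(u • K)) *ᵥ g) x) (-(K *ᵥ g) x) 0 := by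
  let L : Matrix X X ℝ →L[ℝ] ℝ :=
    LinearMap.toContinuousLinearMap ((LinearMap.proj x).comp ((mulVecBilin ℝ ℝ).flip g))
  have hexp := hasDerivAt_exp_smul_const (𝕂 := ℝ) (-K) 0
  rw [zero_smul, exp_zero, one_mul] at hexp
  simp_rw [← smul_neg]
  exact (L.hasFDerivAt.comp_hasDerivAt 0 hexp).congr_deriv
    (by change ((-K) *ᵥ g) x = _; rw [neg_mulVec, Pi.neg_apply])

end LinftyOpNormedRing

theorem le_formanCurvature_of_norm_exp_neg_smul_mulVec_le {K : Matrix X X ℝ} {R : ℝ}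
    (hK : ∀ t, 0 ≤ t → ∀ g : X → ℝ, ‖exp (-(t • K)) *ᵥ g‖ ≤ Real.exp (-R * t) * ‖g‖)
    (x : X) : R ≤ K.formanCurvature x := by
  obtain ⟨g, hg, hgx, hKg⟩ := exists_norm_le_one_mulVec_eq_formanCurvature K x
  let ψ : ℝ → ℝ := fun u => (exp (-(u • K)) *ᵥ g) x - Real.exp (-R * u)
  have hψ : HasDerivAt ψ (-(K *ᵥ g) x - -R) 0 := by
    have hR : HasDerivAt (fun u : ℝ => Real.exp (-R * u)) (-R) 0 := by
      simpa using ((hasDerivAt_id (0 : ℝ)).const_mul (-R)).exp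
    exact (hasDerivAt_exp_neg_smul_mulVec_apply K g x).sub hR
  have hψle : ∀ u, 0 < u → ψ u ≤ ψ 0 := by
    intro u hu
    have hψ0 : ψ 0 = 0 := by simp [ψ, hgx]
    rw [hψ0, sub_nonpos]
    calc (exp (-(u • K)) *ᵥ g) x ≤ ‖exp (-(u • K)) *ᵥ g‖ :=
          (Real.le_norm_self _).trans (norm_le_pi_norm _ x)
      _ ≤ Real.exp (-R * u) * ‖g‖ := hK u hu.le g
      _ ≤ Real.exp (-R * u) := mul_le_of_le_one_right (Real.exp_pos _).le hg
  linarith [hψ.nonpos_of_le_right hψle]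

theorem forall_le_formanCurvature_iff [Nonempty X] {K : Matrix X X ℝ} {R : ℝ} :
    (∀ x, R ≤ K.formanCurvature x) ↔
      ∀ t, 0 ≤ t → ∀ g : X → ℝ, ‖exp (-(t • K)) *ᵥ g‖ ≤ Real.exp (-R * t) * ‖g‖ :=
  ⟨fun hK _ ht => norm_exp_neg_smul_mulVec_le hK ht,
    le_formanCurvature_of_norm_exp_neg_smul_mulVec_le⟩

section DiagonalConj

variable {𝕜 : Type*} [Field 𝕜]

theorem inv_diagonal_of_ne_zero {ω : X → 𝕜} (hω : ∀ x, ω x ≠ 0) :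
    (diagonal ω)⁻¹ = diagonal ω⁻¹ :=
  inv_eq_left_inv <| by rw [diagonal_mul_diagonal]; simp [hω]

theorem conj_diagonal_apply {ω : X → 𝕜} (hω : ∀ x, ω x ≠ 0) (A : Matrix X X 𝕜) (x y : X) :
    ((diagonal ω)⁻¹ * A * diagonal ω) x y = ω y / ω x * A x y := by
  rw [inv_diagonal_of_ne_zero hω, mul_diagonal, diagonal_mul, Pi.inv_apply]
  ring

theorem conj_diagonal_mulVec_div {ω : X → 𝕜} (hω : ∀ x, ω x ≠ 0) (A : Matrix X X 𝕜)
    (f : X → 𝕜) : ((diagonal ω)⁻¹ * A * diagonal ω) *ᵥ (f / ω) = (A *ᵥ f) / ω := by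
  have hD : diagonal ω *ᵥ (f / ω) = f := funext fun x => by
    rw [mulVec_diagonal, Pi.div_apply, mul_div_cancel₀ _ (hω x)]
  ext x
  rw [← mulVec_mulVec, ← mulVec_mulVec, hD, inv_diagonal_of_ne_zero hω, mulVec_diagonal,
    Pi.div_apply, Pi.inv_apply, inv_mul_eq_div]

theorem exp_neg_smul_conj_diagonal {ω : X → ℝ} (hω : ∀ x, ω x ≠ 0) (A : Matrix X X ℝ)
    (t : ℝ) :
    exp (-(t • ((diagonal ω)⁻¹ * A * diagonal ω))) =
      (diagonal ω)⁻¹ * exp (-(t • A)) * diagonal ω := by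
  rw [← exp_conj' _ _ (isUnit_diagonal.2 (Pi.isUnit_iff.2 fun x => (hω x).isUnit))]
  simp only [Matrix.mul_smul, Matrix.smul_mul, mul_neg, neg_mul]

theorem formanCurvature_conj_diagonal {ω : X → ℝ} (hω : ∀ x, 0 < ω x)
    (A : Matrix X X ℝ) (x : X) :
    ((diagonal ω)⁻¹ * A * diagonal ω).formanCurvature x =
      A x x - ∑ y ∈ univ.erase x, ω y / ω x * |A x y| := by
  have hω0 : ∀ x, ω x ≠ 0 := fun x => (hω x).ne'
  simp only [formanCurvature, conj_diagonal_apply hω0, div_self (hω0 x), one_mul, abs_mul,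
    abs_of_pos (div_pos (hω _) (hω x))]

end DiagonalConj

end Matrix

theorem stmt_19_general {X : Type*} [Fintype X] [DecidableEq X] [Nonempty X]
    (ω : X → ℝ) (hω : ∀ x, 0 < ω x)
    (H : Matrix X X ℝ)
    (R : ℝ) :
    (∀ x, R ≤ H x x - ∑ y ∈ Finset.univ.erase x, ω y / ω x * |H x y|) ↔
      (∀ t : ℝ, 0 ≤ t → ∀ f : X → ℝ,
        (⨆ x, |(NormedSpace.exp (-(t • H))).mulVec f x| / ω x)
          ≤ Real.exp (-R * t) * ⨆ x, |f x| / ω x) := by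
  have hω0 : ∀ x, ω x ≠ 0 := fun x => (hω x).ne'
  set K := (diagonal ω)⁻¹ * H * diagonal ω
  have hweighted : ∀ t f, (⨆ x, |(exp (-(t • H)) *ᵥ f) x| / ω x) = ‖exp (-(t • K)) *ᵥ (f / ω)‖ :=
    fun t f => by
      rw [iSup_abs_div_eq_norm hω, exp_neg_smul_conj_diagonal hω0, conj_diagonal_mulVec_div hω0]
  simp_rw [← formanCurvature_conj_diagonal hω, hweighted, iSup_abs_div_eq_norm hω,
    forall_le_formanCurvature_iff]
  refine forall₂_congr fun t _ => ⟨fun h f => h _, fun h g => ?_⟩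
  have hg : g * ω / ω = g := funext fun x => mul_div_cancel_right₀ _ (hω0 x)
  simpa only [hg] using h (g * ω)

/-- Weighted Forman curvature semigroup characterization (`p = ∞`):
`F_ω(x) = H x(x) − ∑_{y≠x} (ω(y)/ω(x))|H y(x)| ≥ R` for all `x` iff
`‖e^{-tH} f‖_{ω,∞} ≤ e^{-Rt} ‖f‖_{ω,∞}` for all `t ≥ 0` and all `f`, where
`‖f‖_{ω,∞} = max_x |f(x)|/ω(x)`. -/
theorem stmt_19 {X : Type*} [Fintype X] [DecidableEq X] [Nonempty X]
    (m ω : X → ℝ) (hm : ∀ x, 0 < m x) (hω : ∀ x, 0 < ω x)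
    (H : Matrix X X ℝ)
    (hsa : ∀ x y, m x * H x y = m y * H y x)
    (R : ℝ) :
    (∀ x, R ≤ H x x - ∑ y ∈ Finset.univ.erase x, ω y / ω x * |H x y|) ↔
      (∀ t : ℝ, 0 ≤ t → ∀ f : X → ℝ,
        (⨆ x, |(NormedSpace.exp (-(t • H))).mulVec f x| / ω x)
          ≤ Real.exp (-R * t) * ⨆ x, |f x| / ω x) :=
  stmt_19_general ω hω H R
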